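/- Let f₀,…,f_m : ℝⁿ → ℝⁿ be globally Lipschitz with linear growth, let U ⊂ ℝᵐ be compact and convex, and suppose u_k ⇀* ū in L^∞(0,T;ℝᵐ) with u_k(t), ū(t) ∈ U a.e., and the trajectories x_k solving x_k(t) = x₀ + ∫₀ᵗ [f₀(x_k) + Σᵢ fᵢ(x_k)(u_k)ᵢ] dσ converge uniformly on [0,T] to a function x̄. Then x̄ solves x̄(t) = x₀ + ∫₀ᵗ [f₀(x̄) + Σᵢ fᵢ(x̄)ūᵢ] dσ, i.e., the limit trajectory is the trajectory associated with the weak-* limit control. -/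

import Mathlib

/-!
Fix `t` and write `Φ(x, v) = f₀(x) + Σᵢ vᵢ fᵢ(x)`. Split
`Φ(x_k, u_k) = [Φ(x_k, u_k) - Φ(x̄, u_k)] + Φ(x̄, u_k)`. Since the controls are uniformly bounded,
the bracket is bounded by a constant times `‖x_k - x̄‖`, so its integral tends to zero by uniform
convergence. In `Φ(x̄, u_k)` the state no longer depends on `k` and the control enters affinely,
so its integral over `(0, t]` converges to that of `Φ(x̄, ū)` by weak-* convergence, tested
against `𝟙_(0,t] · φ(fᵢ(x̄))` for linear functionals `φ` on the (finite-dimensional) state space.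
Passing to the limit in `x_k(t) = x₀ + ∫₀ᵗ Φ(x_k, u_k)` gives the claim.
-/

open MeasureTheory intervalIntegral Filter Set Topology NNReal

def controlAffineField {E : Type*} [AddCommGroup E] [Module ℝ E] {m : ℕ}
    (f : Fin (m + 1) → E → E) (x : E) (v : Fin m → ℝ) : E :=
  f 0 x + ∑ i, v i • f i.succ x

section WeakStar

variable {α ι κ : Type*} [MeasurableSpace α] [Fintype κ]

def WeakStarTendsto (l : Filter ι) (μ : Measure α) (u : ι → α → κ → ℝ) (ubar : α → κ → ℝ) :
    Prop :=
  ∀ ψ : α → κ → ℝ, Integrable ψ μ →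
    Tendsto (fun j => ∫ t, ∑ i, u j t i * ψ t i ∂μ) l (𝓝 (∫ t, ∑ i, ubar t i * ψ t i ∂μ))

variable {l : Filter ι} {μ : Measure α} {u : ι → α → κ → ℝ} {ubar : α → κ → ℝ}

theorem WeakStarTendsto.restrict (h : WeakStarTendsto l μ u ubar) {s : Set α}
    (hs : MeasurableSet s) : WeakStarTendsto l (μ.restrict s) u ubar := by
  intro ψ hψ
  have hind : ∀ w : α → κ → ℝ,
      ∫ t, ∑ i, w t i * s.indicator ψ t i ∂μ = ∫ t in s, ∑ i, w t i * ψ t i ∂μ := by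
    intro w
    rw [← MeasureTheory.integral_indicator hs]
    congr 1 with t
    by_cases ht : t ∈ s <;> simp [ht]
  simpa only [hind] using h (s.indicator ψ) ((integrable_indicator_iff hs).2 hψ)

theorem tendsto_of_forall_dual_tendsto {E : Type*} [NormedAddCommGroup E] [NormedSpace ℝ E]
    [FiniteDimensional ℝ E] {v : ι → E} {w : E}
    (h : ∀ φ : E →L[ℝ] ℝ, Tendsto (fun j => φ (v j)) l (𝓝 (φ w))) : Tendsto v l (𝓝 w) := by
  let e := (Module.finBasis ℝ E).equivFunL
  have he : Tendsto (fun j => e (v j)) l (𝓝 (e w)) :=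
    tendsto_pi_nhds.2 fun i => by
      simpa using h ((ContinuousLinearMap.proj (R := ℝ) (φ := fun _ => ℝ) i).comp (e : E →L[ℝ] _))
  simpa [Function.comp_def] using (e.symm.continuous.tendsto (e w)).comp he

theorem integrable_sum_smul {E : Type*} [NormedAddCommGroup E] [NormedSpace ℝ E]
    {g : κ → α → E} (hg : ∀ i, Integrable (g i) μ) {v : α → κ → ℝ}
    (hv : AEStronglyMeasurable v μ) {M : ℝ} (hvM : ∀ᵐ t ∂μ, ‖v t‖ ≤ M) :
    Integrable (fun t => ∑ i, v t i • g i t) μ :=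
  integrable_finsetSum _ fun i _ =>
    (hg i).bdd_smul M ((continuous_apply i).comp_aestronglyMeasurable hv)
      (hvM.mono fun _ ht => (norm_le_pi_norm _ i).trans ht)

theorem WeakStarTendsto.tendsto_integral_sum_smul {E : Type*} [NormedAddCommGroup E]
    [NormedSpace ℝ E] [FiniteDimensional ℝ E] (h : WeakStarTendsto l μ u ubar)
    {g : κ → α → E} (hg : ∀ i, Integrable (g i) μ)
    (hu : ∀ j, Integrable (fun t => ∑ i, u j t i • g i t) μ)
    (hubar : Integrable (fun t => ∑ i, ubar t i • g i t) μ) :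
    Tendsto (fun j => ∫ t, ∑ i, u j t i • g i t ∂μ) l (𝓝 (∫ t, ∑ i, ubar t i • g i t ∂μ)) := by
  have : CompleteSpace E := FiniteDimensional.complete ℝ E
  refine tendsto_of_forall_dual_tendsto fun φ => ?_
  have hφ : ∀ w : α → κ → ℝ, Integrable (fun t => ∑ i, w t i • g i t) μ →
      φ (∫ t, ∑ i, w t i • g i t ∂μ) = ∫ t, ∑ i, w t i * φ (g i t) ∂μ := by
    intro w hw
    simp [← φ.integral_comp_comm hw]
  simp only [hφ _ (hu _), hφ _ hubar]
  exact h _ (Integrable.of_eval fun i => φ.integrable_comp (hg i))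

end WeakStar

theorem tendsto_integral_of_norm_le_mul_dist {α ι E X : Type*} [MeasurableSpace α]
    [NormedAddCommGroup E] [NormedSpace ℝ E] [PseudoMetricSpace X] {l : Filter ι}
    {μ : Measure α} [IsFiniteMeasure μ] {x : ι → α → X} {xbar : α → X} {s : Set α}
    (hx : TendstoUniformlyOn x xbar l s) (hs : ∀ᵐ t ∂μ, t ∈ s) {G : ι → α → E} {C : ℝ}
    (hC : 0 ≤ C) (hG : ∀ j, ∀ᵐ t ∂μ, ‖G j t‖ ≤ C * dist (x j t) (xbar t)) :
    Tendsto (fun j => ∫ t, G j t ∂μ) l (𝓝 0) := by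
  rw [NormedAddGroup.tendsto_nhds_zero]
  intro ε hε
  have hsmall : Tendsto (fun δ => C * δ * μ.real univ) (𝓝[>] 0) (𝓝 0) := by
    have : Continuous fun δ : ℝ => C * δ * μ.real univ := by fun_prop
    simpa using (this.tendsto 0).mono_left nhdsWithin_le_nhds
  obtain ⟨δ, hδε, hδ⟩ := ((hsmall.eventually (gt_mem_nhds hε)).and self_mem_nhdsWithin).exists
  filter_upwards [Metric.tendstoUniformlyOn_iff.1 hx δ hδ] with j hj
  refine lt_of_le_of_lt (norm_integral_le_of_norm_le_const ?_) hδε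
  filter_upwards [hs, hG j] with t hts hGt
  exact hGt.trans (by gcongr; rw [dist_comm]; exact (hj t hts).le)

section ControlAffine

variable {E : Type*} [NormedAddCommGroup E] [NormedSpace ℝ E] {m : ℕ} {f : Fin (m + 1) → E → E}
  {K : ℝ≥0}

theorem norm_controlAffineField_sub_le (hf : ∀ i, LipschitzWith K (f i)) (x y : E)
    {v : Fin m → ℝ} {M : ℝ} (hv : ‖v‖ ≤ M) :
    ‖controlAffineField f x v - controlAffineField f y v‖ ≤ K * (1 + m * M) * dist x y := by
  have hfi : ∀ i, ‖f i x - f i y‖ ≤ K * dist x y := fun i => by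
    rw [← dist_eq_norm]; exact (hf i).dist_le_mul x y
  have hdiff : controlAffineField f x v - controlAffineField f y v
      = (f 0 x - f 0 y) + ∑ i, v i • (f i.succ x - f i.succ y) := by
    simp only [controlAffineField, smul_sub, Finset.sum_sub_distrib]; abel
  have hterm : ∀ i, ‖v i • (f i.succ x - f i.succ y)‖ ≤ M * (K * dist x y) := fun i => by
    rw [norm_smul]
    exact mul_le_mul ((norm_le_pi_norm v i).trans hv) (hfi _) (norm_nonneg _)
      ((norm_nonneg v).trans hv)
  calc ‖controlAffineField f x v - controlAffineField f y v‖
      ≤ ‖f 0 x - f 0 y‖ + ∑ i, ‖v i • (f i.succ x - f i.succ y)‖ := by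
        rw [hdiff]; exact (norm_add_le _ _).trans (by gcongr; exact norm_sum_le _ _)
    _ ≤ K * dist x y + ∑ _i : Fin m, M * (K * dist x y) := by gcongr with i; exacts [hfi 0, hterm i]
    _ = K * (1 + m * M) * dist x y := by
        simp only [Finset.sum_const, Finset.card_univ, Fintype.card_fin, nsmul_eq_mul]; ring

variable {α ι : Type*} [MeasurableSpace α] {μ : Measure α} {l : Filter ι}

theorem tendsto_integral_controlAffineField [FiniteDimensional ℝ E] [IsFiniteMeasure μ]
    (hf : ∀ i, LipschitzWith K (f i)) {u : ι → α → Fin m → ℝ} {ubar : α → Fin m → ℝ}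
    (hweak : WeakStarTendsto l μ u ubar) {M : ℝ} (hM : 0 ≤ M)
    (hu : ∀ j, AEStronglyMeasurable (u j) μ) (huM : ∀ j, ∀ᵐ t ∂μ, ‖u j t‖ ≤ M)
    (hubar : AEStronglyMeasurable ubar μ) (hubarM : ∀ᵐ t ∂μ, ‖ubar t‖ ≤ M)
    {x : ι → α → E} {xbar : α → E} {s : Set α} (hx : TendstoUniformlyOn x xbar l s)
    (hs : ∀ᵐ t ∂μ, t ∈ s) (hfx : ∀ j i, Integrable (fun t => f i (x j t)) μ)
    (hfxbar : ∀ i, Integrable (fun t => f i (xbar t)) μ) :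
    Tendsto (fun j => ∫ t, controlAffineField f (x j t) (u j t) ∂μ) l
      (𝓝 (∫ t, controlAffineField f (xbar t) (ubar t) ∂μ)) := by
  have hsum : ∀ {y : α → E} {v : α → Fin m → ℝ}, (∀ i, Integrable (fun t => f i (y t)) μ) →
      AEStronglyMeasurable v μ → (∀ᵐ t ∂μ, ‖v t‖ ≤ M) →
      Integrable (fun t => ∑ i, v t i • f i.succ (y t)) μ :=
    fun hy hv hvM => integrable_sum_smul (fun i => hy i.succ) hv hvM
  have hfield : ∀ {y : α → E} {v : α → Fin m → ℝ}, (∀ i, Integrable (fun t => f i (y t)) μ) →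
      AEStronglyMeasurable v μ → (∀ᵐ t ∂μ, ‖v t‖ ≤ M) →
      Integrable (fun t => controlAffineField f (y t) (v t)) μ :=
    fun hy hv hvM => (hy 0).add (hsum hy hv hvM)
  have hfrozen : ∀ {v : α → Fin m → ℝ}, AEStronglyMeasurable v μ → (∀ᵐ t ∂μ, ‖v t‖ ≤ M) →
      ∫ t, controlAffineField f (xbar t) (v t) ∂μ
        = ∫ t, f 0 (xbar t) ∂μ + ∫ t, ∑ i, v t i • f i.succ (xbar t) ∂μ :=
    fun hv hvM => integral_add (hfxbar 0) (hsum hfxbar hv hvM)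
  have hfrozen_lim : Tendsto (fun j => ∫ t, controlAffineField f (xbar t) (u j t) ∂μ) l
      (𝓝 (∫ t, controlAffineField f (xbar t) (ubar t) ∂μ)) := by
    simp only [hfrozen (hu _) (huM _), hfrozen hubar hubarM]
    exact tendsto_const_nhds.add (hweak.tendsto_integral_sum_smul (fun i => hfxbar i.succ)
      (fun j => hsum hfxbar (hu j) (huM j)) (hsum hfxbar hubar hubarM))
  have hstate_lim : Tendsto (fun j => ∫ t, (controlAffineField f (x j t) (u j t)
      - controlAffineField f (xbar t) (u j t)) ∂μ) l (𝓝 0) :=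
    tendsto_integral_of_norm_le_mul_dist hx hs (by positivity) fun j =>
      (huM j).mono fun t ht => norm_controlAffineField_sub_le hf _ _ ht
  refine (zero_add (∫ t, controlAffineField f (xbar t) (ubar t) ∂μ) ▸
    hstate_lim.add hfrozen_lim).congr fun j => ?_
  rw [integral_sub (hfield (hfx j) (hu j) (huM j)) (hfield hfxbar (hu j) (huM j)),
    sub_add_cancel]

end ControlAffine

theorem stmt10_general {n m : ℕ}
    (f : Fin (m + 1) → EuclideanSpace ℝ (Fin n) → EuclideanSpace ℝ (Fin n))
    (k : ℝ)
    (hLip : ∀ i x x', ‖f i x - f i x'‖ ≤ k * ‖x - x'‖)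
    (T : ℝ)
    (U : Set (Fin m → ℝ)) (hU_comp : IsCompact U)
    (u : ℕ → ℝ → Fin m → ℝ) (ubar : ℝ → Fin m → ℝ)
    (hu_meas : ∀ j, Measurable (u j)) (hubar_meas : Measurable ubar)
    (hu_mem : ∀ j, ∀ᵐ t ∂(volume.restrict (Set.Icc 0 T)), u j t ∈ U)
    (hubar_mem : ∀ᵐ t ∂(volume.restrict (Set.Icc 0 T)), ubar t ∈ U)
    -- weak-* convergence `u_k ⇀* ū` in `L^∞ = (L¹)*`
    (hweak : ∀ ψ : ℝ → Fin m → ℝ,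
      Integrable ψ (volume.restrict (Set.Icc 0 T)) →
      Tendsto (fun j => ∫ t in Set.Icc 0 T, ∑ i : Fin m, u j t i * ψ t i ∂volume)
        atTop (nhds (∫ t in Set.Icc 0 T, ∑ i : Fin m, ubar t i * ψ t i ∂volume)))
    (x₀ : EuclideanSpace ℝ (Fin n))
    (x : ℕ → ℝ → EuclideanSpace ℝ (Fin n)) (xbar : ℝ → EuclideanSpace ℝ (Fin n))
    (hxc : ∀ j, ContinuousOn (x j) (Set.Icc 0 T))
    (heq : ∀ j, ∀ t ∈ Set.Icc 0 T,
      x j t = x₀ + ∫ σ in (0:ℝ)..t, (f 0 (x j σ) + ∑ i : Fin m, u j σ i • f i.succ (x j σ)))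
    (hunif : TendstoUniformlyOn x xbar atTop (Set.Icc 0 T)) :
    ∀ t ∈ Set.Icc 0 T,
      xbar t = x₀ + ∫ σ in (0:ℝ)..t,
        (f 0 (xbar σ) + ∑ i : Fin m, ubar σ i • f i.succ (xbar σ)) := by
  have hf : ∀ i, LipschitzWith (Real.toNNReal k) (f i) := fun i =>
    LipschitzWith.of_dist_le' fun a b => by simpa only [dist_eq_norm] using hLip i a b
  obtain ⟨M, hM, hUM⟩ := hU_comp.isBounded.exists_pos_norm_le
  have hxbar : ContinuousOn xbar (Icc 0 T) := hunif.continuousOn (.of_forall hxc)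
  rintro t ⟨ht0, htT⟩
  have hsub : Ioc 0 t ⊆ Icc 0 T := fun σ hσ => ⟨hσ.1.le, hσ.2.trans htT⟩
  have hweak_t : WeakStarTendsto atTop (volume.restrict (Ioc 0 t)) u ubar := by
    simpa only [Measure.restrict_restrict_of_subset hsub] using
      WeakStarTendsto.restrict hweak (measurableSet_Ioc (a := 0) (b := t))
  have hbound : ∀ v : ℝ → Fin m → ℝ, (∀ᵐ σ ∂(volume.restrict (Icc 0 T)), v σ ∈ U) →
      ∀ᵐ σ ∂(volume.restrict (Ioc 0 t)), ‖v σ‖ ≤ M := fun v hv =>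
    ae_restrict_of_ae_restrict_of_subset hsub (hv.mono fun σ hσ => hUM _ hσ)
  have hfint : ∀ y, ContinuousOn y (Icc 0 T) → ∀ i,
      Integrable (fun σ => f i (y σ)) (volume.restrict (Ioc 0 t)) := fun y hy i =>
    ((hf i).continuous.comp_continuousOn hy).integrableOn_Icc.mono_set hsub
  have hlim := tendsto_integral_controlAffineField hf hweak_t hM.le
    (fun j => (hu_meas j).aestronglyMeasurable) (fun j => hbound _ (hu_mem j))
    hubar_meas.aestronglyMeasurable (hbound _ hubar_mem) (hunif.mono hsub)
    (ae_restrict_mem measurableSet_Ioc) (fun j => hfint _ (hxc j)) (hfint _ hxbar)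
  refine tendsto_nhds_unique (hunif.tendsto_at ⟨ht0, htT⟩) ?_
  rw [integral_of_le ht0]
  refine (hlim.const_add x₀).congr fun j => ?_
  rw [heq j t ⟨ht0, htT⟩, integral_of_le ht0]
  rfl

/-- for control-affine dynamics, if `u_k ⇀* ū` in `L^∞(0,T;ℝᵐ)` and the
trajectories `x_k` converge uniformly to `x̄`, then `x̄` is the trajectory associated
with `ū`. -/
theorem stmt10 {n m : ℕ}
    (f : Fin (m + 1) → EuclideanSpace ℝ (Fin n) → EuclideanSpace ℝ (Fin n))
    (k c : ℝ) (hk : 0 < k) (hc : 0 < c)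
    (hLip : ∀ i x x', ‖f i x - f i x'‖ ≤ k * ‖x - x'‖)
    (hgrowth : ∀ i x, ‖f i x‖ ≤ c * (1 + ‖x‖))
    (T : ℝ) (hT : 0 < T)
    (U : Set (Fin m → ℝ)) (hU_comp : IsCompact U) (hU_conv : Convex ℝ U)
    (u : ℕ → ℝ → Fin m → ℝ) (ubar : ℝ → Fin m → ℝ)
    (hu_meas : ∀ j, Measurable (u j)) (hubar_meas : Measurable ubar)
    (hu_mem : ∀ j, ∀ᵐ t ∂(volume.restrict (Set.Icc 0 T)), u j t ∈ U)
    (hubar_mem : ∀ᵐ t ∂(volume.restrict (Set.Icc 0 T)), ubar t ∈ U)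
    -- weak-* convergence `u_k ⇀* ū` in `L^∞ = (L¹)*`
    (hweak : ∀ ψ : ℝ → Fin m → ℝ,
      Integrable ψ (volume.restrict (Set.Icc 0 T)) →
      Tendsto (fun j => ∫ t in Set.Icc 0 T, ∑ i : Fin m, u j t i * ψ t i ∂volume)
        atTop (nhds (∫ t in Set.Icc 0 T, ∑ i : Fin m, ubar t i * ψ t i ∂volume)))
    (x₀ : EuclideanSpace ℝ (Fin n))
    (x : ℕ → ℝ → EuclideanSpace ℝ (Fin n)) (xbar : ℝ → EuclideanSpace ℝ (Fin n))
    (hxc : ∀ j, ContinuousOn (x j) (Set.Icc 0 T))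
    (heq : ∀ j, ∀ t ∈ Set.Icc 0 T,
      x j t = x₀ + ∫ σ in (0:ℝ)..t, (f 0 (x j σ) + ∑ i : Fin m, u j σ i • f i.succ (x j σ)))
    (hunif : TendstoUniformlyOn x xbar atTop (Set.Icc 0 T)) :
    ∀ t ∈ Set.Icc 0 T,
      xbar t = x₀ + ∫ σ in (0:ℝ)..t,
        (f 0 (xbar σ) + ∑ i : Fin m, ubar σ i • f i.succ (xbar σ)) :=
  stmt10_general f k hLip T U hU_comp u ubar hu_meas hubar_meas hu_mem hubar_mem hweak x₀ x xbar hxc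
    heq hunif
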